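/- arXiv:1308.2927 — 5 statements merged into one kernel-verified Lean document; each statement's English description precedes it below -/
import Mathlib

section
/- For the Rayleigh model f_θ(x) = (x/θ²) exp(-x²/(2θ²)) 1_{[0,∞)}(x) with θ > 0, the squared Hellinger distance is h²(f_θ, f_{θ'}) = (θ - θ')² / (θ² + θ'²). -/
/-! For probability densities, `h²(f, g) = 1 - ∫ √(f g)`. The geometric mean of two Rayleigh
densities is again of the form `c x e^{-b x²}` on `[0, ∞)`, with `b = (θ² + θ'²) / (4 θ² θ'²)`,
and `∫₀^∞ x e^{-b x²} dx = 1 / (2b)`; hence `∫ √(f_θ f_θ') = 2 θ θ' / (θ² + θ'²)`. -/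

open MeasureTheory Real

noncomputable def hSq (f g : ℝ → ℝ) : ℝ :=
  (1/2) * ∫ x : ℝ, (Real.sqrt (f x) - Real.sqrt (g x))^2

noncomputable def rayleigh (θ : ℝ) (x : ℝ) : ℝ :=
  if 0 ≤ x then (x / θ^2) * Real.exp (-(x^2) / (2 * θ^2)) else 0

open Set

theorem integral_Ioi_mul_exp_neg_mul_sq {b : ℝ} (hb : 0 < b) :
    ∫ x in Ioi 0, x * exp (-b * x ^ 2) = (2 * b)⁻¹ := by
  apply Complex.ofReal_injective
  rw [← integral_complex_ofReal]
  push_cast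
  exact integral_mul_cexp_neg_mul_sq (by simpa using hb)

theorem integral_indicator_Ici_mul_exp_neg_mul_sq (a : ℝ) {b : ℝ} (hb : 0 < b) :
    ∫ x, (Ici 0).indicator (fun x => a * (x * exp (-b * x ^ 2))) x = a * (2 * b)⁻¹ := by
  rw [integral_indicator measurableSet_Ici, integral_Ici_eq_integral_Ioi, integral_const_mul,
    integral_Ioi_mul_exp_neg_mul_sq hb]

theorem hSq_eq_one_sub_integral_sqrt_mul_sqrt {f g : ℝ → ℝ} (hf : 0 ≤ f) (hg : 0 ≤ g)
    (hf1 : ∫ x, f x = 1) (hg1 : ∫ x, g x = 1) :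
    hSq f g = 1 - ∫ x, √(f x) * √(g x) := by
  have hexpand (x : ℝ) : (√(f x) - √(g x)) ^ 2 = f x + g x - 2 * (√(f x) * √(g x)) := by
    rw [sub_sq, sq_sqrt (hf x), sq_sqrt (hg x)]; ring
  have hfi : Integrable f := .of_integral_ne_zero (by simp [hf1])
  have hgi : Integrable g := .of_integral_ne_zero (by simp [hg1])
  have hsum : Integrable fun x => f x + g x := hfi.add hgi
  have hfg : Integrable fun x => √(f x) * √(g x) := by
    refine Integrable.mono' (hsum.div_const 2)
      ((continuous_sqrt.comp_aestronglyMeasurable hfi.1).mul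
        (continuous_sqrt.comp_aestronglyMeasurable hgi.1)) (.of_forall fun x => ?_)
    rw [norm_of_nonneg (by positivity)]
    nlinarith [hexpand x, sq_nonneg (√(f x) - √(g x))]
  simp only [hSq, hexpand]
  rw [integral_sub hsum (hfg.const_mul 2), integral_add hfi hgi, integral_const_mul, hf1, hg1]
  ring

theorem rayleigh_nonneg (θ : ℝ) : 0 ≤ rayleigh θ := fun x => by
  unfold rayleigh
  split_ifs <;> positivity

theorem rayleigh_eq_indicator (θ : ℝ) :
    rayleigh θ = (Ici 0).indicator fun x => (θ ^ 2)⁻¹ * (x * exp (-(2 * θ ^ 2)⁻¹ * x ^ 2)) := by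
  ext x
  simp only [rayleigh, indicator, mem_Ici]
  split_ifs <;> ring_nf

theorem integral_rayleigh {θ : ℝ} (hθ : θ ≠ 0) : ∫ x, rayleigh θ x = 1 := by
  rw [rayleigh_eq_indicator, integral_indicator_Ici_mul_exp_neg_mul_sq _ (by positivity)]
  field_simp

theorem sqrt_rayleigh_mul_sqrt_rayleigh {θ θ' : ℝ} (hθ : 0 < θ) (hθ' : 0 < θ') :
    (fun x => √(rayleigh θ x) * √(rayleigh θ' x)) = (Ici 0).indicator fun x =>
      (θ * θ')⁻¹ * (x * exp (-((θ ^ 2 + θ' ^ 2) / (4 * θ ^ 2 * θ' ^ 2)) * x ^ 2)) := by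
  ext x
  simp only [indicator, mem_Ici, rayleigh]
  split_ifs with hx
  · rw [← sqrt_mul (by positivity), sqrt_eq_iff_eq_sq (by positivity) (by positivity), mul_pow,
      mul_pow, sq (exp _), ← exp_add, mul_mul_mul_comm, ← exp_add]
    field_simp
    ring_nf
  · simp

theorem integral_sqrt_rayleigh_mul_sqrt_rayleigh {θ θ' : ℝ} (hθ : 0 < θ) (hθ' : 0 < θ') :
    ∫ x, √(rayleigh θ x) * √(rayleigh θ' x) = 2 * θ * θ' / (θ ^ 2 + θ' ^ 2) := by
  rw [sqrt_rayleigh_mul_sqrt_rayleigh hθ hθ',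
    integral_indicator_Ici_mul_exp_neg_mul_sq _ (by positivity)]
  field_simp
  ring

theorem stmt1 (θ θ' : ℝ) (hθ : 0 < θ) (hθ' : 0 < θ') :
    hSq (rayleigh θ) (rayleigh θ') = (θ - θ')^2 / (θ^2 + θ'^2) := by
  rw [hSq_eq_one_sub_integral_sqrt_mul_sqrt (rayleigh_nonneg θ) (rayleigh_nonneg θ')
    (integral_rayleigh hθ.ne') (integral_rayleigh hθ'.ne'),
    integral_sqrt_rayleigh_mul_sqrt_rayleigh hθ hθ']
  field_simp
  ring
end

section
/- Let 0 < m ≤ M. For the uniform model f_θ = θ^{-1} 1_{[0,θ]}, for all θ, θ' ∈ [m, M] one has (1/(2M)) |θ' - θ| ≤ h²(f_θ, f_{θ'}) ≤ (1/(2m)) |θ' - θ|. -/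
open MeasureTheory Real

noncomputable def unif (θ : ℝ) (x : ℝ) : ℝ :=
  if 0 ≤ x ∧ x ≤ θ then θ⁻¹ else 0

/-!
For `0 < θ ≤ θ'` the integrand `(√f_θ - √f_θ')²` is the constant `(θ^{-1/2} - θ'^{-1/2})²` on
`[0, θ]` and `1/θ'` on `(θ, θ']`, which gives `h²(f_θ, f_θ') = 1 - √(θ/θ') = (θ' - θ) / (√θ' (√θ' + √θ))`.
The denominator lies between `2θ` and `2θ'`.
-/

open Set

lemma hSq_comm (f g : ℝ → ℝ) : hSq f g = hSq g f := by
  simp only [hSq, ← neg_sub (√(f _)), neg_sq]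

lemma sq_sqrt_unif_sub_sqrt_unif {θ θ' : ℝ} (hθ : 0 < θ) (hle : θ ≤ θ') :
    (fun x => (√(unif θ x) - √(unif θ' x)) ^ 2) =
      (Icc 0 θ).indicator (fun _ => (√θ⁻¹ - √θ'⁻¹) ^ 2) + (Ioc θ θ').indicator (fun _ => θ'⁻¹) := by
  ext x
  simp only [unif, Pi.add_apply, indicator, mem_Icc, mem_Ioc]
  rcases lt_or_ge x 0 with hx0 | hx0
  · simp [hx0.not_ge, (hx0.trans hθ).not_gt]
  rcases le_or_gt x θ with hxθ | hxθ
  · simp [hx0, hxθ, hxθ.trans hle, hxθ.not_gt]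
  rcases le_or_gt x θ' with hxθ' | hxθ'
  · simp [hx0, hxθ, hxθ', hxθ.not_ge, sq_sqrt (hθ.trans_le hle).le]
  · simp [hxθ.not_ge, hxθ'.not_ge]

lemma integral_sq_sqrt_unif_sub_sqrt_unif {θ θ' : ℝ} (hθ : 0 < θ) (hle : θ ≤ θ') :
    ∫ x, (√(unif θ x) - √(unif θ' x)) ^ 2 = θ * (√θ⁻¹ - √θ'⁻¹) ^ 2 + (θ' - θ) * θ'⁻¹ := by
  rw [sq_sqrt_unif_sub_sqrt_unif hθ hle, integral_add', integral_indicator_const _ measurableSet_Icc,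
    integral_indicator_const _ measurableSet_Ioc, volume_real_Icc_of_le hθ.le,
    volume_real_Ioc_of_le hle, sub_zero, smul_eq_mul, smul_eq_mul]
  · exact (integrableOn_const measure_Icc_lt_top.ne).integrable_indicator measurableSet_Icc
  · exact (integrableOn_const measure_Ioc_lt_top.ne).integrable_indicator measurableSet_Ioc

lemma hSq_unif_of_le {θ θ' : ℝ} (hθ : 0 < θ) (hle : θ ≤ θ') :
    hSq (unif θ) (unif θ') = (θ' - θ) / (√θ' * (√θ' + √θ)) := by
  have hs : 0 < √θ := sqrt_pos.2 hθ
  have ht : 0 < √θ' := sqrt_pos.2 (hθ.trans_le hle)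
  have hθs := sq_sqrt hθ.le
  have hθt := sq_sqrt (hθ.trans_le hle).le
  rw [hSq, integral_sq_sqrt_unif_sub_sqrt_unif hθ hle, sqrt_inv, sqrt_inv]
  generalize √θ = s at *
  generalize √θ' = t at *
  subst hθs hθt
  field_simp
  ring

lemma hSq_unif_bounds_of_le {θ θ' : ℝ} (hθ : 0 < θ) (hle : θ ≤ θ') :
    (θ' - θ) / (2 * θ') ≤ hSq (unif θ) (unif θ') ∧ hSq (unif θ) (unif θ') ≤ (θ' - θ) / (2 * θ) := by
  have hs : √θ ≤ √θ' := sqrt_le_sqrt hle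
  have hθθ : √θ * √θ = θ := mul_self_sqrt hθ.le
  have hθθ' : √θ' * √θ' = θ' := mul_self_sqrt (hθ.trans_le hle).le
  rw [hSq_unif_of_le hθ hle]
  constructor <;> apply div_le_div_of_nonneg_left (sub_nonneg.2 hle) <;> nlinarith [sqrt_pos.2 hθ]

lemma hSq_unif_bounds {θ θ' : ℝ} (hθ : 0 < θ) (hθ' : 0 < θ') :
    |θ' - θ| / (2 * max θ θ') ≤ hSq (unif θ) (unif θ') ∧
      hSq (unif θ) (unif θ') ≤ |θ' - θ| / (2 * min θ θ') := by
  rcases le_total θ θ' with hle | hle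
  · rw [abs_of_nonneg (sub_nonneg.2 hle), max_eq_right hle, min_eq_left hle]
    exact hSq_unif_bounds_of_le hθ hle
  · rw [abs_sub_comm, abs_of_nonneg (sub_nonneg.2 hle), max_eq_left hle, min_eq_right hle, hSq_comm]
    exact hSq_unif_bounds_of_le hθ' hle

theorem stmt3_general (m M θ θ' : ℝ) (hm : 0 < m)
    (hθ : θ ∈ Set.Icc m M) (hθ' : θ' ∈ Set.Icc m M) :
    (1 / (2 * M)) * |θ' - θ| ≤ hSq (unif θ) (unif θ') ∧
      hSq (unif θ) (unif θ') ≤ (1 / (2 * m)) * |θ' - θ| := by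
  obtain ⟨hlow, hupp⟩ := hSq_unif_bounds (hm.trans_le hθ.1) (hm.trans_le hθ'.1)
  rw [one_div_mul_eq_div, one_div_mul_eq_div]
  constructor
  · refine le_trans (div_le_div_of_nonneg_left (abs_nonneg _)
      (mul_pos two_pos (hm.trans_le (hθ.1.trans (le_max_left _ _)))) ?_) hlow
    exact mul_le_mul_of_nonneg_left (max_le hθ.2 hθ'.2) zero_le_two
  · refine hupp.trans (div_le_div_of_nonneg_left (abs_nonneg _) (mul_pos two_pos hm) ?_)
    exact mul_le_mul_of_nonneg_left (le_min hθ.1 hθ'.1) zero_le_two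

theorem stmt3 (m M θ θ' : ℝ) (hm : 0 < m) (hmM : m ≤ M)
    (hθ : θ ∈ Set.Icc m M) (hθ' : θ' ∈ Set.Icc m M) :
    (1 / (2 * M)) * |θ' - θ| ≤ hSq (unif θ) (unif θ') ∧
      hSq (unif θ) (unif θ') ≤ (1 / (2 * m)) * |θ' - θ| :=
  stmt3_general m M θ θ' hm hθ hθ'
end

section
/- For the log-reparametrized uniform model g_t = f_{e^t} where f_θ = θ^{-1} 1_{[0,θ]}, one has h²(g_t, g_{t'}) = 1 - e^{-|t' - t|/2} for all real t, t'. Moreover, if log m ≤ t, t' ≤ log M with 0 < m ≤ M, then ((1 - √(m/M)) / log(M/m)) |t' - t| ≤ h²(g_t, g_{t'}) ≤ (1/2) |t' - t| (the lower bound being read as 0 ≤ h² when m = M). -/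
open MeasureTheory Real

/-!
Both densities are constant on `[0, a]` and `f_b` alone is positive on `(a, b]`, so for
`a ≤ b` the Hellinger integral is elementary: `h²(f_a, f_b) = 1 - √(a / b)`. In the log
parametrisation this is `1 - exp (-|t' - t| / 2)`. The upper bound is `1 - e^{-x} ≤ x`; the lower
bound is the chord inequality for the concave function `s ↦ 1 - e^{-s/2}` on
`[0, log (M / m)]`, which contains every `|t' - t|` in question.
-/

open Set

lemma sqrt_unif_sub_sqrt_unif_sq {a b : ℝ} (ha : 0 ≤ a) (hab : a ≤ b) (x : ℝ) :
    (√(unif a x) - √(unif b x)) ^ 2 =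
      (Icc 0 a).indicator (fun _ => (√a⁻¹ - √b⁻¹) ^ 2) x + (Ioc a b).indicator (fun _ => b⁻¹) x := by
  simp only [unif, indicator_apply, mem_Icc, mem_Ioc]
  rcases lt_or_ge x 0 with hx0 | hx0
  · simp [hx0.not_ge, (hx0.trans_le ha).not_gt]
  rcases le_or_gt x a with hxa | hxa
  · simp [hx0, hxa, hxa.trans hab]
  rcases le_or_gt x b with hxb | hxb
  · simp [hx0, hxa, hxa.not_ge, hxb, sq_sqrt (ha.trans hab)]
  · simp [hxa.not_ge, hxb.not_ge]

lemma hSq_unif_of_le_s4 {a b : ℝ} (ha : 0 < a) (hab : a ≤ b) :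
    hSq (unif a) (unif b) = 1 - √(a / b) := by
  simp_rw [hSq, sqrt_unif_sub_sqrt_unif_sq ha.le hab]
  rw [integral_add
      ((integrable_indicator_iff measurableSet_Icc).2 (integrableOn_const measure_Icc_lt_top.ne))
      ((integrable_indicator_iff measurableSet_Ioc).2 (integrableOn_const measure_Ioc_lt_top.ne)),
    integral_indicator_const _ measurableSet_Icc, integral_indicator_const _ measurableSet_Ioc,
    volume_real_Icc_of_le ha.le, volume_real_Ioc_of_le hab, sqrt_inv, sqrt_inv,
    sqrt_div' _ (ha.le.trans hab)]
  have closed_form (p q : ℝ) (hp : p ≠ 0) (hq : q ≠ 0) :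
      1 / 2 * ((p ^ 2 - 0) • (p⁻¹ - q⁻¹) ^ 2 + (q ^ 2 - p ^ 2) • (q ^ 2)⁻¹) = 1 - p / q := by
    simp only [smul_eq_mul]
    field_simp
    ring
  have := closed_form (√a) (√b) (sqrt_pos.2 ha).ne' (sqrt_pos.2 (ha.trans_le hab)).ne'
  rwa [sq_sqrt ha.le, sq_sqrt (ha.le.trans hab)] at this

lemma hSq_unif_exp (t t' : ℝ) :
    hSq (unif (exp t)) (unif (exp t')) = 1 - exp (-|t' - t| / 2) := by
  wlog h : t ≤ t' generalizing t t'
  · rw [hSq_comm, this t' t (le_of_not_ge h), abs_sub_comm]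
  rw [hSq_unif_of_le_s4 (exp_pos t) (exp_le_exp.2 h), ← exp_sub, ← exp_half,
    abs_of_nonneg (sub_nonneg.2 h), neg_sub]

lemma div_mul_le_one_sub_exp_neg {s L : ℝ} (hs : 0 ≤ s) (hsL : s ≤ L) :
    (1 - exp (-L)) / L * s ≤ 1 - exp (-s) := by
  rcases hs.eq_or_lt with rfl | hs
  · simp
  have hL : 0 < L := hs.trans_le hsL
  have hconv := convexOn_exp.2 (mem_univ (-L)) (mem_univ 0)
    (div_nonneg hs.le hL.le) (sub_nonneg.2 ((div_le_one hL).2 hsL)) (add_sub_cancel _ _)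
  have hcomb : s / L * -L + (1 - s / L) * 0 = -s := by field_simp; ring
  simp only [smul_eq_mul, hcomb, exp_zero] at hconv
  calc (1 - exp (-L)) / L * s = 1 - (s / L * exp (-L) + (1 - s / L) * 1) := by ring
    _ ≤ 1 - exp (-s) := by linarith

theorem stmt4 (m M : ℝ) (hm : 0 < m) (hmM : m ≤ M) :
    (∀ t t' : ℝ,
      hSq (unif (Real.exp t)) (unif (Real.exp t')) = 1 - Real.exp (-|t' - t| / 2)) ∧
    (∀ t t' : ℝ, Real.log m ≤ t → t ≤ Real.log M → Real.log m ≤ t' → t' ≤ Real.log M →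
      ((1 - Real.sqrt (m / M)) / Real.log (M / m)) * |t' - t| ≤
          hSq (unif (Real.exp t)) (unif (Real.exp t')) ∧
        hSq (unif (Real.exp t)) (unif (Real.exp t')) ≤ (1 / 2) * |t' - t|) := by
  refine ⟨hSq_unif_exp, fun t t' ht htM ht' ht'M => ?_⟩
  have hM : 0 < M := hm.trans_le hmM
  have hsL : |t' - t| ≤ log (M / m) := by
    rw [log_div hM.ne' hm.ne']
    exact abs_sub_le_of_le_of_le ht' ht'M ht htM
  have hsqrt : √(m / M) = exp (-log (M / m) / 2) := by
    rw [exp_half, exp_neg, exp_log (div_pos hM hm), inv_div]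
  rw [hSq_unif_exp, hsqrt]
  constructor
  · have := div_mul_le_one_sub_exp_neg (div_nonneg (abs_nonneg (t' - t)) two_pos.le)
      (div_le_div_of_nonneg_right hsL two_pos.le)
    calc (1 - exp (-log (M / m) / 2)) / log (M / m) * |t' - t|
        = (1 - exp (-(log (M / m) / 2))) / (log (M / m) / 2) * (|t' - t| / 2) := by
          rw [neg_div]; field_simp
      _ ≤ 1 - exp (-|t' - t| / 2) := by rwa [neg_div]
  · have := one_sub_le_exp_neg (|t' - t| / 2)
    rw [← neg_div] at this
    linarith
end

section
/- For the shifted Pareto-type model f_θ(x) = (x - θ + 1)^{-2} 1_{[θ,∞)}(x), one has, for θ < θ' with Δ = θ' - θ, h²(f_θ, f_{θ'}) = 1 - log(1 + Δ)/Δ, and consequently h²(f_θ, f_{θ'}) ≤ Δ/2. -/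
open MeasureTheory Real

noncomputable def pareto (θ : ℝ) (x : ℝ) : ℝ :=
  if θ ≤ x then ((x - θ + 1)^2)⁻¹ else 0

/-!
For probability densities, h²(f, g) = 1 - ∫ √(f g), and for the shifted Pareto model
√(f_θ f_θ') = 1 / ((x - θ + 1)(x - θ' + 1)) on [θ', ∞). Splitting into partial fractions, this
integrates to log(1 + Δ) / Δ. The bound h² ≤ Δ / 2 then follows from log(1 + x) ≥ 2x / (x + 2).
-/

open Set Filter Topology

theorem hSq_eq_one_sub_integral_sqrt_mul {f g : ℝ → ℝ} (hf₀ : 0 ≤ f) (hg₀ : 0 ≤ g)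
    (hf : Integrable f) (hg : Integrable g) (hf₁ : ∫ x, f x = 1) (hg₁ : ∫ x, g x = 1) :
    hSq f g = 1 - ∫ x, √(f x) * √(g x) := by
  have hfg : Integrable fun x ↦ √(f x) * √(g x) := by
    refine ((hf.add hg).div_const 2).mono'
      ((continuous_sqrt.comp_aestronglyMeasurable hf.1).mul
        (continuous_sqrt.comp_aestronglyMeasurable hg.1)) (ae_of_all _ fun x ↦ ?_)
    rw [Real.norm_of_nonneg (by positivity), Pi.add_apply]
    nlinarith [sq_nonneg (√(f x) - √(g x)), sq_sqrt (hf₀ x), sq_sqrt (hg₀ x)]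
  have hexpand :
      (fun x ↦ (√(f x) - √(g x)) ^ 2) = fun x ↦ f x + g x - 2 * (√(f x) * √(g x)) := by
    ext x
    rw [sub_sq, sq_sqrt (hf₀ x), sq_sqrt (hg₀ x)]
    ring
  rw [hSq, hexpand, integral_sub (f := fun x ↦ f x + g x) (hf.add hg) (hfg.const_mul 2),
    integral_add hf hg, integral_const_mul, hf₁, hg₁]
  ring

theorem pareto_nonneg (θ : ℝ) : 0 ≤ pareto θ := fun x ↦ by
  unfold pareto; split_ifs <;> positivity

theorem pareto_eq_indicator (θ : ℝ) :
    pareto θ = (Ici θ).indicator fun x ↦ ((x - θ + 1) ^ 2)⁻¹ := rfl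

theorem hasDerivAt_neg_inv_sub_add_one {θ x : ℝ} (hx : θ ≤ x) :
    HasDerivAt (fun y ↦ -(y - θ + 1)⁻¹) ((x - θ + 1) ^ 2)⁻¹ x :=
  ((((hasDerivAt_id' x).sub_const θ).add_const 1).inv (by linarith)).neg.congr_deriv
    (by rw [neg_div, neg_neg, one_div])

theorem tendsto_sub_add_one_atTop (θ : ℝ) : Tendsto (fun x : ℝ ↦ x - θ + 1) atTop atTop :=
  tendsto_atTop_atTop.2 fun b ↦ ⟨b + θ, fun x hx ↦ by linarith⟩

theorem tendsto_neg_inv_sub_add_one (θ : ℝ) :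
    Tendsto (fun y ↦ -(y - θ + 1)⁻¹) atTop (𝓝 0) := by
  simpa using (tendsto_sub_add_one_atTop θ).inv_tendsto_atTop.neg

theorem integrable_pareto (θ : ℝ) : Integrable (pareto θ) := by
  rw [pareto_eq_indicator, integrable_indicator_iff measurableSet_Ici,
    integrableOn_Ici_iff_integrableOn_Ioi]
  exact integrableOn_Ioi_deriv_of_nonneg' (fun x hx ↦ hasDerivAt_neg_inv_sub_add_one hx)
    (fun x _ ↦ by positivity) (tendsto_neg_inv_sub_add_one θ)

theorem integral_pareto (θ : ℝ) : ∫ x, pareto θ x = 1 := by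
  rw [pareto_eq_indicator, integral_indicator measurableSet_Ici, integral_Ici_eq_integral_Ioi,
    integral_Ioi_of_hasDerivAt_of_nonneg' (fun x hx ↦ hasDerivAt_neg_inv_sub_add_one hx)
    (fun x _ ↦ by positivity) (tendsto_neg_inv_sub_add_one θ)]
  simp

theorem sqrt_pareto_mul_sqrt_pareto {θ θ' : ℝ} (h : θ ≤ θ') (x : ℝ) :
    √(pareto θ x) * √(pareto θ' x) =
      (Ici θ').indicator (fun x ↦ ((x - θ + 1) * (x - θ' + 1))⁻¹) x := by
  by_cases hx : θ' ≤ x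
  · have hxθ : θ ≤ x := h.trans hx
    rw [indicator_of_mem (mem_Ici.mpr hx), pareto, pareto, if_pos hxθ, if_pos hx, sqrt_inv,
      sqrt_inv, sqrt_sq (by linarith), sqrt_sq (by linarith), mul_inv]
  · simp [pareto, hx]

theorem integral_sqrt_pareto_mul_sqrt_pareto {θ θ' : ℝ} (h : θ < θ') :
    ∫ x, √(pareto θ x) * √(pareto θ' x) = log (1 + (θ' - θ)) / (θ' - θ) := by
  have hΔ : θ' - θ ≠ 0 := (sub_pos.mpr h).ne'
  set G : ℝ → ℝ := fun x ↦ (log (x - θ' + 1) - log (x - θ + 1)) / (θ' - θ)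
  have hG : ∀ x ∈ Ici θ', HasDerivAt G ((x - θ + 1) * (x - θ' + 1))⁻¹ x := by
    intro x hx
    have hx' : 0 < x - θ' + 1 := by rw [mem_Ici] at hx; linarith
    have hxθ : 0 < x - θ + 1 := by linarith
    exact (((((hasDerivAt_id' x).sub_const θ').add_const 1).log hx'.ne').sub
      ((((hasDerivAt_id' x).sub_const θ).add_const 1).log hxθ.ne')).div_const (θ' - θ)
      |>.congr_deriv (by field_simp; ring)
  have hlim : Tendsto G atTop (𝓝 0) := by
    have := ((tendsto_log_comp_add_sub_log (θ' - θ)).comp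
      (tendsto_sub_add_one_atTop θ')).neg.div_const (θ' - θ)
    rw [neg_zero, zero_div] at this
    refine this.congr fun x ↦ ?_
    simp only [G, Function.comp_apply]
    ring_nf
  simp_rw [sqrt_pareto_mul_sqrt_pareto h.le]
  rw [integral_indicator measurableSet_Ici, integral_Ici_eq_integral_Ioi,
    integral_Ioi_of_hasDerivAt_of_nonneg' hG (fun x hx ↦ ?_) hlim]
  · simp only [G, sub_self, zero_add, log_one]
    ring_nf
  · rw [mem_Ioi] at hx
    have : 0 < x - θ + 1 := by linarith
    have : 0 < x - θ' + 1 := by linarith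
    positivity

theorem one_sub_log_one_add_div_le_half {x : ℝ} (hx : 0 < x) : 1 - log (1 + x) / x ≤ x / 2 :=
  calc 1 - log (1 + x) / x ≤ 1 - 2 * x / (x + 2) / x := by
        gcongr; exact le_log_one_add_of_nonneg hx.le
    _ = x / (x + 2) := by field_simp; ring
    _ ≤ x / 2 := div_le_div_of_nonneg_left hx.le two_pos (by linarith)

theorem stmt6 (θ θ' : ℝ) (h : θ < θ') :
    hSq (pareto θ) (pareto θ') = 1 - Real.log (1 + (θ' - θ)) / (θ' - θ) ∧
      hSq (pareto θ) (pareto θ') ≤ (θ' - θ) / 2 := by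
  have hSq_eq : hSq (pareto θ) (pareto θ') = 1 - Real.log (1 + (θ' - θ)) / (θ' - θ) := by
    rw [hSq_eq_one_sub_integral_sqrt_mul (pareto_nonneg θ) (pareto_nonneg θ')
      (integrable_pareto θ) (integrable_pareto θ') (integral_pareto θ) (integral_pareto θ'),
      integral_sqrt_pareto_mul_sqrt_pareto h]
  exact ⟨hSq_eq, hSq_eq ▸ one_sub_log_one_add_div_le_half (sub_pos.mpr h)⟩
end

section
/- For the shifted exponential family f_{(m,λ)}(x) = λ e^{-λ(x - m)} 1_{[m,∞)}(x), the squared Hellinger distance is: for m' ≥ m, h²(f_{(m,λ)}, f_{(m',λ')}) = 1 - (2√(λλ')/(λ + λ')) e^{-λ(m' - m)/2}, and for m' ≤ m, h²(f_{(m,λ)}, f_{(m',λ')}) = 1 - (2√(λλ')/(λ + λ')) e^{-λ'(m - m')/2}. -/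
open MeasureTheory Real

noncomputable def shiftExp (m l : ℝ) (x : ℝ) : ℝ :=
  if m ≤ x then l * Real.exp (-l * (x - m)) else 0

lemma shiftExp_nonneg (m l x : ℝ) (hl : 0 < l) : 0 ≤ shiftExp m l x := by
  unfold shiftExp; split <;> positivity

lemma sqrt_exp' (t : ℝ) : Real.sqrt (Real.exp t) = Real.exp (t / 2) := by
  rw [show Real.exp t = Real.exp (t/2) ^ 2 by rw [sq, ← Real.exp_add]; ring_nf,
    Real.sqrt_sq (Real.exp_pos _).le]

lemma exp_shift_integrableOn (b c : ℝ) (hb : 0 < b) :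
    IntegrableOn (fun x : ℝ => Real.exp (-b * (x - c))) (Set.Ioi c) := by
  have h : (fun x : ℝ => Real.exp (-b * (x - c))) =
      fun x => Real.exp (b * c) * Real.exp (-b * x) := by
    ext x; rw [← Real.exp_add]; ring_nf
  rw [h]
  exact (exp_neg_integrableOn_Ioi c hb).const_mul _

lemma exp_shift_integral (b c : ℝ) (hb : 0 < b) :
    ∫ x in Set.Ioi c, Real.exp (-b * (x - c)) = 1 / b := by
  have key : ∀ x : ℝ, Set.indicator (Set.Ioi c) (fun x => Real.exp (-b * (x - c))) x =
      Set.indicator (Set.Ioi 0) (fun y => Real.exp (-b * y)) (x - c) := by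
    intro x
    by_cases hx : x ∈ Set.Ioi c
    · rw [Set.indicator_of_mem hx, Set.indicator_of_mem (by simp at hx ⊢; linarith)]
    · rw [Set.indicator_of_notMem hx, Set.indicator_of_notMem (by simp at hx ⊢; linarith)]
  rw [← integral_indicator measurableSet_Ioi]
  simp_rw [key]
  rw [integral_sub_right_eq_self (Set.indicator (Set.Ioi 0) (fun y => Real.exp (-b * y))) c]
  rw [integral_indicator measurableSet_Ioi]
  have h2 : ∀ x : ℝ, Real.exp (-b * x) = Real.exp (-(b * x)) := by intro x; ring_nf
  simp_rw [h2]
  have := integral_comp_mul_left_Ioi (fun y => Real.exp (-y)) 0 hb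
  simp only [mul_zero, smul_eq_mul] at this
  rw [this, integral_exp_neg_Ioi_zero]
  simp [one_div]

lemma shiftExp_eq_indicator (m l : ℝ) :
    shiftExp m l = Set.indicator (Set.Ici m) (fun x => l * Real.exp (-l * (x - m))) := by
  ext x
  unfold shiftExp
  by_cases h : m ≤ x
  · rw [if_pos h]; simp [Set.indicator_apply, Set.mem_Ici, h]
  · rw [if_neg h]; simp [Set.indicator_apply, Set.mem_Ici, h]

lemma shiftExp_integrable (m l : ℝ) (hl : 0 < l) : Integrable (shiftExp m l) := by
  rw [shiftExp_eq_indicator]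
  rw [integrable_indicator_iff measurableSet_Ici]
  rw [IntegrableOn, ← restrict_Ioi_eq_restrict_Ici]
  exact ((exp_shift_integrableOn l m hl).const_mul l)

lemma shiftExp_integral (m l : ℝ) (hl : 0 < l) : ∫ x : ℝ, shiftExp m l x = 1 := by
  rw [show (fun x => shiftExp m l x) = shiftExp m l from rfl, shiftExp_eq_indicator,
    integral_indicator measurableSet_Ici, ← restrict_Ioi_eq_restrict_Ici,
    integral_const_mul, exp_shift_integral l m hl]
  field_simp

lemma cross_eq (m m' l l' : ℝ) (hl : 0 < l) (hl' : 0 < l') (hm : m ≤ m') :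
    (fun x => Real.sqrt (shiftExp m l x * shiftExp m' l' x)) =
      Set.indicator (Set.Ici m')
        (fun x => (Real.sqrt (l * l') * Real.exp (-l * (m' - m) / 2)) *
          Real.exp (-((l + l') / 2) * (x - m'))) := by
  ext x
  by_cases hx : m' ≤ x
  · have hx1 : m ≤ x := hm.trans hx
    rw [Set.indicator_apply, if_pos (Set.mem_Ici.mpr hx)]
    unfold shiftExp
    rw [if_pos hx1, if_pos hx]
    rw [show l * Real.exp (-l * (x - m)) * (l' * Real.exp (-l' * (x - m'))) =
      (l * l') * (Real.exp (-l * (x - m)) * Real.exp (-l' * (x - m'))) by ring]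
    rw [Real.sqrt_mul (by positivity), ← Real.exp_add, sqrt_exp',
      show (-l * (x - m) + -l' * (x - m')) / 2 =
        -l * (m' - m) / 2 + -((l + l') / 2) * (x - m') by ring,
      Real.exp_add]
    ring
  · rw [Set.indicator_apply, if_neg (by simpa [Set.mem_Ici] using hx)]
    unfold shiftExp
    rw [if_neg hx, mul_zero, Real.sqrt_zero]

lemma cross_integrable (m m' l l' : ℝ) (hl : 0 < l) (hl' : 0 < l') (hm : m ≤ m') :
    Integrable (fun x => Real.sqrt (shiftExp m l x * shiftExp m' l' x)) := by
  rw [cross_eq m m' l l' hl hl' hm]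
  rw [integrable_indicator_iff measurableSet_Ici]
  rw [IntegrableOn, ← restrict_Ioi_eq_restrict_Ici]
  exact (exp_shift_integrableOn ((l + l') / 2) m' (by positivity)).const_mul _

lemma cross_integral (m m' l l' : ℝ) (hl : 0 < l) (hl' : 0 < l') (hm : m ≤ m') :
    ∫ x : ℝ, Real.sqrt (shiftExp m l x * shiftExp m' l' x) =
      (2 * Real.sqrt (l * l') / (l + l')) * Real.exp (-l * (m' - m) / 2) := by
  rw [cross_eq m m' l l' hl hl' hm, integral_indicator measurableSet_Ici,
    ← restrict_Ioi_eq_restrict_Ici, integral_const_mul,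
    exp_shift_integral ((l + l') / 2) m' (by positivity)]
  have h : l + l' ≠ 0 := by positivity
  field_simp

lemma hSq_case (m m' l l' : ℝ) (hl : 0 < l) (hl' : 0 < l') (hm : m ≤ m') :
    hSq (shiftExp m l) (shiftExp m' l') =
      1 - (2 * Real.sqrt (l * l') / (l + l')) * Real.exp (-l * (m' - m) / 2) := by
  unfold hSq
  have hfg : ∀ x, (Real.sqrt (shiftExp m l x) - Real.sqrt (shiftExp m' l' x))^2 =
      shiftExp m l x + shiftExp m' l' x -
        2 * Real.sqrt (shiftExp m l x * shiftExp m' l' x) := by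
    intro x
    rw [sub_sq, Real.sq_sqrt (shiftExp_nonneg m l x hl),
      Real.sq_sqrt (shiftExp_nonneg m' l' x hl'),
      Real.sqrt_mul (shiftExp_nonneg m l x hl)]
    ring
  simp_rw [hfg]
  have h1 : Integrable (fun x => shiftExp m l x + shiftExp m' l' x) :=
    (shiftExp_integrable m l hl).add (shiftExp_integrable m' l' hl')
  have h2 : Integrable (fun x => 2 * Real.sqrt (shiftExp m l x * shiftExp m' l' x)) :=
    (cross_integrable m m' l l' hl hl' hm).const_mul 2
  rw [integral_sub h1 h2,
    integral_add (shiftExp_integrable m l hl) (shiftExp_integrable m' l' hl'),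
    shiftExp_integral m l hl, shiftExp_integral m' l' hl',
    integral_const_mul, cross_integral m m' l l' hl hl' hm]
  ring

theorem stmt15 (m m' l l' : ℝ) (hl : 0 < l) (hl' : 0 < l') :
    (m ≤ m' →
      hSq (shiftExp m l) (shiftExp m' l') =
        1 - (2 * Real.sqrt (l * l') / (l + l')) * Real.exp (-l * (m' - m) / 2)) ∧
    (m' ≤ m →
      hSq (shiftExp m l) (shiftExp m' l') =
        1 - (2 * Real.sqrt (l * l') / (l + l')) * Real.exp (-l' * (m - m') / 2)) := by
  constructor
  · exact hSq_case m m' l l' hl hl'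
  · intro hm
    have hsymm : hSq (shiftExp m l) (shiftExp m' l') =
        hSq (shiftExp m' l') (shiftExp m l) := by
      unfold hSq
      congr 1
      apply integral_congr_ae
      filter_upwards with x
      ring
    rw [hsymm, hSq_case m' m l' l hl' hl hm, mul_comm l' l, add_comm l' l]
end
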